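/- arXiv:math/0304420 — 7 statements merged into one kernel-verified Lean document; each statement's English description precedes it below -/
import Mathlib

section
/- Let p be a prime. For every unit a of Z_p with a ≠ 1 and every natural number r > 1 with a^r = 1, the number r does not divide p. (Thus no element of the Smarandache semigroup Z_p, which has order p, is a Smarandache Cauchy element.) -/
/-- Let `p` be a prime.  For every unit `a` of `ZMod p` with `a ≠ 1` and every
`r > 1` with `a ^ r = 1`, `r` does not divide `p`.  Thus no element of the
Smarandache semigroup `ZMod p` (of order `p`) is a Smarandache Cauchy element. -/
theorem zmod_prime_no_cauchy_element (p : ℕ) (hp : p.Prime)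
    (a : (ZMod p)ˣ) (ha : a ≠ 1) (r : ℕ) (hr : 1 < r) (har : a ^ r = 1) :
    ¬ (r ∣ p) := by
  intro hdvd
  rcases (Nat.Prime.eq_one_or_self_of_dvd hp r hdvd) with h1 | hp'
  · omega
  · rw [hp'] at har
    haveI : Fact p.Prime := ⟨hp⟩
    have h1 : orderOf a ∣ p := orderOf_dvd_of_pow_eq_one har
    have h2 : orderOf a ∣ p - 1 := by
      have := orderOf_dvd_card (G := (ZMod p)ˣ) (x := a)
      rwa [ZMod.card_units_eq_totient, Nat.totient_prime hp] at this
    have h3 : orderOf a ∣ 1 := by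
      have := Nat.dvd_sub h1 h2
      rwa [Nat.sub_sub_self hp.one_lt.le] at this
    have : orderOf a = 1 := Nat.eq_one_of_dvd_one h3
    exact ha (orderOf_eq_one_iff.mp this)
end

section
/- Let G be a group whose order is a prime p with p ≥ 5. Then every element x ≠ 1 of G has a Smarandache inverse. -/
/-- In a group `G` with identity `1`, an element `x ≠ 1` has a Smarandache inverse
if there are `y a b : G` with `x*y = 1`, each of `a`, `b` distinct from `1`, `x`
and `y`, and `x*a = y`, `y*b = x`, `a*b = 1`. -/
def HasSmarandacheInverse {G : Type*} [Group G] (x : G) : Prop :=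
  ∃ y a b : G, x * y = 1 ∧
    a ≠ 1 ∧ a ≠ x ∧ a ≠ y ∧ b ≠ 1 ∧ b ≠ x ∧ b ≠ y ∧
    x * a = y ∧ y * b = x ∧ a * b = 1

/-- In a group of prime order `p ≥ 5`, every element `x ≠ 1` has a Smarandache
inverse. -/
theorem prime_order_group_smarandache_inverse {G : Type*} [Group G]
    (p : ℕ) (hp : p.Prime) (hp5 : 5 ≤ p) (hG : Nat.card G = p)
    (x : G) (hx : x ≠ 1) : HasSmarandacheInverse x := by
  have hord : orderOf x = p := by
    have hd : orderOf x ∣ p := hG ▸ orderOf_dvd_natCard x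
    rcases (Nat.Prime.eq_one_or_self_of_dvd hp _ hd) with h | h
    · exact absurd (orderOf_eq_one_iff.mp h) hx
    · exact h
  have key : ∀ n : ℕ, 0 < n → n < p → x ^ n ≠ 1 := by
    intro n hn hnp h
    have := Nat.le_of_dvd hn (hord ▸ orderOf_dvd_of_pow_eq_one h)
    omega
  have h2 : x ^ 2 ≠ 1 := key 2 (by norm_num) (by omega)
  have h3 : x ^ 3 ≠ 1 := key 3 (by norm_num) (by omega)
  refine ⟨x⁻¹, x⁻¹ ^ 2, x ^ 2, by group, ?_, ?_, ?_, h2, ?_, ?_, by group, by group, by group⟩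
  · simpa using fun h => h2 (by rw [← inv_inv (x ^ 2)]; simp [← inv_pow, h])
  · intro h
    apply h3
    have : x ^ 3 = x * x ^ 2 := by group
    rw [this, ← inv_inv (x ^ 2), ← inv_pow, h]
    group
  · intro h
    apply hx
    rw [inv_pow, inv_inj, sq] at h
    exact mul_right_cancel (h.trans (one_mul x).symm)
  · intro h
    apply hx
    rw [sq] at h
    exact mul_right_cancel (h.trans (one_mul x).symm)
  · intro h
    apply h3
    have : x ^ 3 = x ^ 2 * x := by group
    rw [this, h]; group
end

section
/- For every n ≥ 4, the symmetric group of permutations of Fin n contains an element x ≠ 1 that has no Smarandache inverse; hence Sₙ is not a Smarandache inverse group. -/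
/-- An involution has no Smarandache inverse. -/
lemma involution_not_hasSmarandacheInverse {G : Type*} [Group G] {x : G}
    (hx : x * x = 1) : ¬ HasSmarandacheInverse x := by
  rintro ⟨y, a, b, hxy, ha1, -, -, -, -, -, hxa, -, -⟩
  have hy : y = x := by
    have : x * y = x * x := by rw [hxy, hx]
    exact mul_left_cancel this
  apply ha1
  have : x * a = x * 1 := by rw [hxa, hy, mul_one]
  exact mul_left_cancel this

/-- For every `n ≥ 4`, the symmetric group on `Fin n` contains an element `x ≠ 1`
with no Smarandache inverse; hence `Sₙ` is not a Smarandache inverse group. -/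
theorem symmetricGroup_not_smarandache_inverse_group (n : ℕ) (hn : 4 ≤ n) :
    ∃ x : Equiv.Perm (Fin n), x ≠ 1 ∧ ¬ HasSmarandacheInverse x := by
  have h0 : (0 : ℕ) < n := by omega
  have h1 : (1 : ℕ) < n := by omega
  refine ⟨Equiv.swap ⟨0, h0⟩ ⟨1, h1⟩, ?_, ?_⟩
  · intro h
    have := congrArg (fun e => e ⟨0, h0⟩) h
    simp [Equiv.swap_apply_left] at this
  · apply involution_not_hasSmarandacheInverse
    exact Equiv.swap_mul_self _ _
end

section
/- Let G be a finite group and let p be a prime with p ≥ 5 such that p divides the order of G. Then G contains an element x ≠ 1 that has a Smarandache inverse. -/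
/-! The witnesses are forced: `y = x⁻¹`, `a = x⁻²`, `b = x²`, and the six distinctness
conditions reduce to `x ≠ 1`, `x² ≠ 1`, `x³ ≠ 1`. An element of prime order `p ≥ 5`,
which exists by Cauchy's theorem, satisfies all three. -/

theorem hasSmarandacheInverse_of_sq_ne_one_of_pow_three_ne_one {G : Type*} [Group G] {x : G}
    (h2 : x ^ 2 ≠ 1) (h3 : x ^ 3 ≠ 1) : HasSmarandacheInverse x := by
  have h1 : x ≠ 1 := by rintro rfl; simp at h2
  refine ⟨x⁻¹, x⁻¹ ^ 2, x ^ 2, mul_inv_cancel x, ?_, ?_, ?_, ?_, ?_, ?_, by group, by group,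
    by group⟩
  · simpa using h2
  · contrapose! h3
    calc x ^ 3 = x * (x⁻¹ ^ 2)⁻¹ := by group
      _ = 1 := by rw [h3, mul_inv_cancel]
  · contrapose! h1
    simpa [pow_two] using h1
  · exact h2
  · contrapose! h1
    simpa [pow_two] using h1
  · contrapose! h3
    rw [pow_succ, h3, inv_mul_cancel]

/-- Let `G` be a finite group and `p ≥ 5` a prime dividing its order.  Then `G`
contains an element `x ≠ 1` having a Smarandache inverse. -/
theorem finite_group_has_smarandache_inverse_element {G : Type*} [Group G] [Finite G]
    (p : ℕ) (hp : p.Prime) (hp5 : 5 ≤ p) (hdvd : p ∣ Nat.card G) :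
    ∃ x : G, x ≠ 1 ∧ HasSmarandacheInverse x := by
  have : Fact p.Prime := ⟨hp⟩
  obtain ⟨g, hg⟩ := exists_prime_orderOf_dvd_card' p hdvd
  have hg_pow : ∀ n, n ≠ 0 → n < p → g ^ n ≠ 1 := fun n hn hnp =>
    pow_ne_one_of_lt_orderOf hn (hg ▸ hnp)
  exact ⟨g, by simpa using hg_pow 1 one_ne_zero (by omega),
    hasSmarandacheInverse_of_sq_ne_one_of_pow_three_ne_one (hg_pow 2 two_ne_zero (by omega))
      (hg_pow 3 three_ne_zero (by omega))⟩
end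

section
/- For every n ≥ 1, the dihedral group D_{2n} of order 2n (generated by a and b with a² = bⁿ = 1 and bab = a) contains an element x ≠ 1 that has no Smarandache inverse. -/
/-- An involution `x` is its own inverse `y`, so `x * a = y` would force `a = 1`. -/
theorem HasSmarandacheInverse.mul_self_ne_one {G : Type*} [Group G] {x : G}
    (h : HasSmarandacheInverse x) : x * x ≠ 1 := by
  obtain ⟨y, a, -, hxy, ha, -, -, -, -, -, hxa, -, -⟩ := h
  intro hxx
  have hy : y = x := mul_left_cancel (hxy.trans hxx.symm)
  exact ha (mul_eq_left.mp (hxa.trans hy))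

theorem dihedralGroup_has_element_with_no_smarandache_inverse_general (n : ℕ) :
    ∃ x : DihedralGroup n, x ≠ 1 ∧ ¬ HasSmarandacheInverse x :=
  ⟨DihedralGroup.sr 0, nofun, fun h => h.mul_self_ne_one (DihedralGroup.sr_mul_self 0)⟩

/-- For every `n ≥ 1`, the dihedral group of order `2n` contains an element `x ≠ 1`
having no Smarandache inverse. -/
theorem dihedralGroup_has_element_with_no_smarandache_inverse (n : ℕ) (hn : 1 ≤ n) :
    ∃ x : DihedralGroup n, x ≠ 1 ∧ ¬ HasSmarandacheInverse x :=
  dihedralGroup_has_element_with_no_smarandache_inverse_general n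
end

section
/- No element x ≠ 1 of the symmetric group S₃ of permutations of a 3-element set has a Smarandache inverse; that is, S₃ is a Smarandache inverse free group. -/
/-- No element `x ≠ 1` of the symmetric group `S₃` of permutations of a 3-element
set has a Smarandache inverse; `S₃` is a Smarandache inverse free group. -/
theorem s3_smarandache_inverse_free (x : Equiv.Perm (Fin 3)) (hx : x ≠ 1) :
    ¬ HasSmarandacheInverse x := by
  revert hx; revert x; unfold HasSmarandacheInverse; decide
end

section
/- For every n ≥ 3, there exist permutations x, y, a of Fin n with x ≠ y such that x = a·y·a⁻¹, a is conjugate to x, and a is conjugate to y; that is, the symmetric group Sₙ has Smarandache conjugates. -/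
/-- For every `n ≥ 3`, there are permutations `x y a` of `Fin n` with `x ≠ y` such
that `x = a * y * a⁻¹`, `a` is conjugate to `x`, and `a` is conjugate to `y`; that
is, the symmetric group `Sₙ` has Smarandache conjugates. -/
theorem symmetricGroup_has_smarandache_conjugates (n : ℕ) (hn : 3 ≤ n) :
    ∃ x y a : Equiv.Perm (Fin n), x ≠ y ∧
      x = a * y * a⁻¹ ∧
      (∃ c : Equiv.Perm (Fin n), x = c * a * c⁻¹) ∧
      (∃ c : Equiv.Perm (Fin n), y = c * a * c⁻¹) := by
  have key : ∀ (f : Equiv.Perm (Fin n)) (x y : Fin n),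
      f * Equiv.swap x y * f⁻¹ = Equiv.swap (f x) (f y) :=
    fun f x y => (Equiv.swap_apply_apply f x y).symm
  set i0 : Fin n := ⟨0, by omega⟩ with hi0
  set i1 : Fin n := ⟨1, by omega⟩ with hi1
  set i2 : Fin n := ⟨2, by omega⟩ with hi2
  have h01 : i0 ≠ i1 := by simp [hi0, hi1, Fin.ext_iff]
  have h02 : i0 ≠ i2 := by simp [hi0, hi2, Fin.ext_iff]
  have h12 : i1 ≠ i2 := by simp [hi1, hi2, Fin.ext_iff]
  refine ⟨Equiv.swap i0 i1, Equiv.swap i0 i2, Equiv.swap i1 i2, ?_, ?_, ?_, ?_⟩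
  · intro h
    have h' := congrArg (fun f => f i1) h
    simp only [Equiv.swap_apply_right,
      Equiv.swap_apply_of_ne_of_ne h01.symm h12] at h'
    exact h01 h'
  · rw [key, Equiv.swap_apply_of_ne_of_ne h01 h02,
      Equiv.swap_apply_right]
  · refine ⟨Equiv.swap i0 i2, ?_⟩
    rw [key, Equiv.swap_apply_of_ne_of_ne h01.symm h12,
      Equiv.swap_apply_right, Equiv.swap_comm]
  · refine ⟨Equiv.swap i0 i1, ?_⟩
    rw [key, Equiv.swap_apply_right,
      Equiv.swap_apply_of_ne_of_ne h02.symm h12.symm]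
end
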